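/- Let A be a finitely generated abelian group and Q ⊂ (A ⊗_ℤ ℝ)^* a closed salient cone. Then (A, ⪯_Q) is a directed set: ⪯_Q is reflexive and transitive, and for any x₀, x₁ ∈ A there exists x₂ ∈ A with x₀ ⪯_Q x₂ and x₁ ⪯_Q x₂. -/

import Mathlib

/-- An additive character `A → ℝ`.  Under the hom-tensor adjunction
`Hom_ℝ(A ⊗_ℤ ℝ, ℝ) ≅ Hom_ℤ(A, ℝ)`, such functions correspond exactly to the elements of the
real dual `(A ⊗_ℤ ℝ)^*` of the (multiplicatively written) abelian group `A`. -/
def IsAddChar {A : Type*} [CommGroup A] (f : A → ℝ) : Prop :=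
  ∀ x y : A, f (x * y) = f x + f y

/-- `Q` is a cone in `(A ⊗_ℤ ℝ)^*`: all of its elements lie in the dual space
(i.e. are additive characters) and `Q` is closed under positive linear combinations. -/
def IsFunctionalCone {A : Type*} [CommGroup A] (Q : Set (A → ℝ)) : Prop :=
  (∀ f ∈ Q, IsAddChar f) ∧
    ∀ f ∈ Q, ∀ g ∈ Q, ∀ α β : ℝ, 0 < α → 0 < β → α • f + β • g ∈ Q

/-- The relation `x ⪯_Q y`, i.e. `f((y·x⁻¹) ⊗ 1) ≥ 0` for all `f ∈ Q`. -/
def ConePreorder {A : Type*} [CommGroup A] (Q : Set (A → ℝ)) (x y : A) : Prop :=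
  ∀ f ∈ Q, 0 ≤ f (y * x⁻¹)

/-- A cone is salient if for every nonzero `f ∈ Q` we have `-f ∉ Q`. -/
def IsSalientCone {A : Type*} [CommGroup A] (Q : Set (A → ℝ)) : Prop :=
  ∀ f ∈ Q, f ≠ 0 → -f ∉ Q

/-- `y` is a `Q`-cofinal element: `0 ⪯_Q y` and the powers of `y` are cofinal in `(A, ⪯_Q)`. -/
def IsCofinalElt {A : Type*} [CommGroup A] (Q : Set (A → ℝ)) (y : A) : Prop :=
  ConePreorder Q 1 y ∧ ∀ a : A, ∃ n : ℕ, ConePreorder Q a (y ^ n)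

/-!
Fix generators `g i` of `A`. A character `f` is determined by its coordinate vector
`(f (g i))ᵢ`, so `Q` becomes a closed salient cone `C` in a Euclidean space. By Farkas' lemma
`C` is the inner dual of its inner dual, so salience forces the inner dual of `C` to span, hence
to have interior; being an open cone, that interior contains an integer vector `m`. For
`y = ∏ g i ^ m i` we get `f y ≥ 0` on `Q`, and since `m` is interior, `p • m - k` stays in the
dual for large `p`, i.e. `f (y ^ p) ≥ f (∏ g i ^ k i)`: the powers of `y` are cofinal, and any
two elements lie below a common power of `y`.
-/
open Filter Topology Pointwise
open scoped RealInnerProductSpace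

theorem IsClosed.image_of_leftInvOn {X Y : Type*} [TopologicalSpace X] [TopologicalSpace Y]
    [T2Space Y] {φ : X → Y} {ψ : Y → X} {s : Set X} (hs : IsClosed s) (hφ : Continuous φ)
    (hψ : Continuous ψ) (h : Set.LeftInvOn ψ φ s) : IsClosed (φ '' s) := by
  have : φ '' s = ψ ⁻¹' s ∩ {y | φ (ψ y) = y} := by
    ext y
    constructor
    · rintro ⟨x, hx, rfl⟩
      exact ⟨by rwa [Set.mem_preimage, h hx], congrArg φ (h hx)⟩
    · rintro ⟨hy, hy'⟩
      exact ⟨ψ y, hy, hy'⟩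
  rw [this]
  exact (hs.preimage hψ).inter (isClosed_eq (hφ.comp hψ) continuous_id)

theorem ConvexCone.Salient.map {R M N : Type*} [Semiring R] [PartialOrder R] [AddCommGroup M]
    [AddCommGroup N] [Module R M] [Module R N] {C : ConvexCone R M} (hC : C.Salient)
    {f : M →ₗ[R] N} (hf : Set.InjOn f (C ∪ -C)) : (C.map f).Salient := by
  rintro _ ⟨x, hx, rfl⟩ hfx ⟨y, hy, hyx⟩
  have hxy : y = -x :=
    hf (Or.inl hy) (Or.inr (by simpa using hx)) (by rw [hyx, map_neg])
  exact hC x hx (fun hx0 => hfx (by rw [hx0, map_zero])) (hxy ▸ hy)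

section ConeGeometry

variable {E : Type*} [NormedAddCommGroup E] [InnerProductSpace ℝ E] [FiniteDimensional ℝ E]

theorem ProperCone.span_innerDual_eq_top (K : ProperCone ℝ E)
    (hK : (K : ConvexCone ℝ E).Salient) : Submodule.span ℝ (innerDual (K : Set E) : Set E) = ⊤ := by
  by_contra h
  obtain ⟨u, hu, hu0⟩ :=
    Submodule.exists_mem_ne_zero_of_ne_bot (Submodule.orthogonal_eq_bot_iff.not.mpr h)
  have horth : ∀ y ∈ innerDual (K : Set E), ⟪y, u⟫ = 0 := fun y hy =>
    (Submodule.mem_orthogonal _ u).mp hu y (Submodule.subset_span hy)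
  have hmem : ∀ v : E, (∀ y ∈ innerDual (K : Set E), ⟪y, v⟫ = 0) → v ∈ K := fun v hv => by
    rw [← K.innerDual_innerDual]
    exact fun y hy => (hv y hy).ge
  exact hK u (hmem u horth) hu0
    (hmem (-u) fun y hy => by rw [inner_neg_right, horth y hy, neg_zero])

theorem ConvexCone.interior_innerDual_nonempty (C : ConvexCone ℝ E)
    (hclosed : IsClosed (C : Set E)) (hC : C.Salient) :
    (interior (ProperCone.innerDual (C : Set E) : Set E)).Nonempty := by
  rcases (C : Set E).eq_empty_or_nonempty with hempty | hne
  · simp [hempty]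
  lift C to ProperCone ℝ E using ⟨hne, hclosed⟩
  rw [(ProperCone.innerDual _).convex.interior_nonempty_iff_affineSpan_eq_top,
    AffineSubspace.affineSpan_eq_top_iff_vectorSpan_eq_top_of_nonempty ℝ E E
      (ProperCone.innerDual _).nonempty, vectorSpan_def, eq_top_iff,
    ← C.span_innerDual_eq_top hC]
  exact Submodule.span_mono fun x hx => ⟨x, hx, 0, (ProperCone.innerDual _).zero_mem, sub_zero x⟩

end ConeGeometry

section PointedCone

variable {E : Type*} [AddCommGroup E] [Module ℝ E] [TopologicalSpace E]

theorem PointedCone.smul_mem_interior [ContinuousConstSMul ℝ E] (C : PointedCone ℝ E) {r : ℝ}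
    (hr : 0 < r) {x : E} (hx : x ∈ interior (C : Set E)) : r • x ∈ interior (C : Set E) := by
  have hsub : r • (C : Set E) ⊆ C := by
    rintro _ ⟨y, hy, rfl⟩
    exact C.smul_mem hr.le hy
  exact interior_mono hsub (interior_smul₀ hr.ne' (C : Set E) ▸ Set.smul_mem_smul_set hx)

theorem PointedCone.exists_nat_smul_add_mem [ContinuousAdd E] [ContinuousSMul ℝ E]
    (C : PointedCone ℝ E) {w : E} (hw : w ∈ interior (C : Set E)) (v : E) :
    ∃ p : ℕ, p • w + v ∈ C := by
  have hlim : Tendsto (fun p : ℕ => w + (p : ℝ)⁻¹ • v) atTop (𝓝 w) := by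
    simpa using tendsto_const_nhds.add
      ((tendsto_inv_atTop_zero (𝕜 := ℝ)).comp tendsto_natCast_atTop_atTop |>.smul_const v)
  obtain ⟨p, hp, hp0⟩ : ∃ p : ℕ, w + (p : ℝ)⁻¹ • v ∈ interior (C : Set E) ∧ p ≠ 0 :=
    ((hlim.eventually (isOpen_interior.mem_nhds hw)).and (eventually_ne_atTop 0)).exists
  refine ⟨p, ?_⟩
  have := C.smul_mem (Nat.cast_nonneg p) (interior_subset hp)
  rwa [smul_add, smul_smul,
    mul_inv_cancel₀ (Nat.cast_ne_zero.mpr hp0), one_smul, Nat.cast_smul_eq_nsmul] at this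

end PointedCone

theorem EuclideanSpace.exists_intCast_mem_of_isOpen {ι : Type*} [Fintype ι]
    {U : Set (EuclideanSpace ℝ ι)} (hU : IsOpen U) (hne : U.Nonempty)
    (hsmul : ∀ r : ℝ, 0 < r → ∀ x ∈ U, r • x ∈ U) :
    ∃ m : ι → ℤ, WithLp.toLp 2 (fun i => (m i : ℝ)) ∈ U := by
  obtain ⟨w, hw⟩ := hne
  obtain ⟨δ, hδ, hball⟩ := Metric.isOpen_iff.mp hU w hw
  obtain ⟨N, hN⟩ := exists_nat_gt (√(Fintype.card ι) / δ)
  have hNpos : (0 : ℝ) < N := lt_of_le_of_lt (by positivity) hN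
  set m : ι → ℤ := fun i => round (N * w i)
  set v := WithLp.toLp 2 (fun i => (m i : ℝ))
  have hround : ‖v - (N : ℝ) • w‖ ≤ √(Fintype.card ι) := by
    rw [EuclideanSpace.norm_eq]
    refine Real.sqrt_le_sqrt ?_
    calc ∑ i, ‖(v - (N : ℝ) • w) i‖ ^ 2 ≤ ∑ _i : ι, (1 : ℝ) := by
          refine Finset.sum_le_sum fun i _ => ?_
          rw [Real.norm_eq_abs, PiLp.sub_apply, PiLp.smul_apply, smul_eq_mul, abs_sub_comm]
          exact pow_le_one₀ (abs_nonneg _) ((abs_sub_round _).trans (by norm_num))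
      _ = Fintype.card ι := by simp
  have hmem : (N : ℝ)⁻¹ • v ∈ Metric.ball w δ := by
    rw [Metric.mem_ball, dist_eq_norm, ← inv_smul_smul₀ hNpos.ne' w, ← smul_sub, norm_smul,
      norm_inv, Real.norm_natCast, inv_mul_lt_iff₀ hNpos]
    exact hround.trans_lt ((div_lt_iff₀ hδ).mp hN)
  exact ⟨m, by simpa [hNpos.ne'] using hsmul N hNpos _ (hball hmem)⟩

namespace IsAddChar

variable {A : Type*} [CommGroup A] {f : A → ℝ}

def toMonoidHom (hf : IsAddChar f) : A →* Multiplicative ℝ :=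
  MonoidHom.mk' (fun a => .ofAdd (f a)) hf

@[simp]
theorem toMonoidHom_apply (hf : IsAddChar f) (a : A) : hf.toMonoidHom a = .ofAdd (f a) := rfl

theorem map_one (hf : IsAddChar f) : f 1 = 0 :=
  congrArg Multiplicative.toAdd hf.toMonoidHom.map_one

theorem map_mul_inv (hf : IsAddChar f) (x y : A) : f (x * y⁻¹) = f x - f y := by
  simpa [div_eq_mul_inv, sub_eq_add_neg] using
    congrArg Multiplicative.toAdd (map_div hf.toMonoidHom x y)

theorem map_pow (hf : IsAddChar f) (x : A) (n : ℕ) : f (x ^ n) = n * f x := by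
  simpa using congrArg Multiplicative.toAdd (_root_.map_pow hf.toMonoidHom x n)

theorem map_prod_zpow (hf : IsAddChar f) {ι : Type*} (s : Finset ι) (g : ι → A) (m : ι → ℤ) :
    f (∏ i ∈ s, g i ^ m i) = ∑ i ∈ s, m i * f (g i) := by
  simpa only [toAdd_prod, map_zpow, toMonoidHom_apply, toAdd_zpow, toAdd_ofAdd, zsmul_eq_mul] using
    congrArg Multiplicative.toAdd (map_prod hf.toMonoidHom (fun i => g i ^ m i) s)

theorem neg (hf : IsAddChar f) : IsAddChar (-f) := fun x y => by
  simp [hf x y, add_comm]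

end IsAddChar

section Coordinates

variable {A ι : Type*}

def charCoords (g : ι → A) : (A → ℝ) →ₗ[ℝ] EuclideanSpace ℝ ι :=
  (WithLp.linearEquiv 2 ℝ (ι → ℝ)).symm.toLinearMap ∘ₗ LinearMap.funLeft ℝ ℝ g

@[simp]
theorem charCoords_apply (g : ι → A) (f : A → ℝ) (i : ι) : charCoords g f i = f (g i) := rfl

theorem continuous_charCoords (g : ι → A) : Continuous (charCoords g) :=
  (PiLp.continuous_toLp 2 _).comp (continuous_pi fun i => continuous_apply (g i))

variable [CommGroup A] [Fintype ι]

theorem IsAddChar.map_prod_zpow_eq_inner {f : A → ℝ} (hf : IsAddChar f) (g : ι → A)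
    (m : ι → ℤ) : f (∏ i, g i ^ m i) = ⟪charCoords g f, WithLp.toLp 2 (fun i => (m i : ℝ))⟫ := by
  simp [hf.map_prod_zpow, PiLp.inner_apply, mul_comm]

variable {g : ι → A}

theorem exists_eq_prod_zpow (hg : Subgroup.closure (Set.range g) = ⊤) (a : A) :
    ∃ m : ι → ℤ, a = ∏ i, g i ^ m i :=
  Subgroup.exists_of_mem_closure_range g a (hg ▸ Subgroup.mem_top a)

theorem injOn_charCoords (hg : Subgroup.closure (Set.range g) = ⊤) :
    Set.InjOn (charCoords g) {f : A → ℝ | IsAddChar f} := by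
  intro f hf f' hf' hff'
  funext a
  obtain ⟨m, rfl⟩ := exists_eq_prod_zpow hg a
  rw [hf.map_prod_zpow_eq_inner, hf'.map_prod_zpow_eq_inner, hff']

theorem isClosed_image_charCoords (hg : Subgroup.closure (Set.range g) = ⊤) {Q : Set (A → ℝ)}
    (hQ : ∀ f ∈ Q, IsAddChar f) (hclosed : IsClosed Q) : IsClosed (charCoords g '' Q) := by
  choose k hk using exists_eq_prod_zpow hg
  refine hclosed.image_of_leftInvOn (continuous_charCoords g)
    (ψ := fun c a => ∑ i, (k a i : ℝ) * c i) (by fun_prop) fun f hf => funext fun a => ?_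
  conv_rhs => rw [hk a, (hQ f hf).map_prod_zpow]
  rfl

end Coordinates

def IsFunctionalCone.toConvexCone {A : Type*} [CommGroup A] {Q : Set (A → ℝ)}
    (hQ : IsFunctionalCone Q) : ConvexCone ℝ (A → ℝ) where
  carrier := Q
  smul_mem' c hc f hf := by
    simpa [← add_smul] using hQ.2 f hf f hf (c / 2) (c / 2) (by positivity) (by positivity)
  add_mem' f hf f' hf' := by simpa using hQ.2 f hf f' hf' 1 1 one_pos one_pos

section Preorder

variable {A : Type*} [CommGroup A] {Q : Set (A → ℝ)}

theorem ConePreorder.refl (hQ : ∀ f ∈ Q, IsAddChar f) (x : A) : ConePreorder Q x x :=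
  fun f hf => by rw [mul_inv_cancel, (hQ f hf).map_one]

theorem ConePreorder.trans (hQ : ∀ f ∈ Q, IsAddChar f) {x y z : A} (hxy : ConePreorder Q x y)
    (hyz : ConePreorder Q y z) : ConePreorder Q x z := fun f hf => by
  have := add_nonneg (hxy f hf) (hyz f hf)
  rwa [(hQ f hf).map_mul_inv, (hQ f hf).map_mul_inv, sub_add_sub_cancel',
    ← (hQ f hf).map_mul_inv] at this

theorem ConePreorder.pow_mono (hQ : ∀ f ∈ Q, IsAddChar f) {y : A} (hy : ConePreorder Q 1 y)
    {m n : ℕ} (hmn : m ≤ n) : ConePreorder Q (y ^ m) (y ^ n) := fun f hf => by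
  have hfy := hy f hf
  rw [inv_one, mul_one] at hfy
  rw [(hQ f hf).map_mul_inv, (hQ f hf).map_pow, (hQ f hf).map_pow, sub_nonneg]
  exact mul_le_mul_of_nonneg_right (Nat.cast_le.mpr hmn) hfy

theorem IsCofinalElt.exists_upper_bound (hQ : ∀ f ∈ Q, IsAddChar f) {y : A}
    (hy : IsCofinalElt Q y) (x₀ x₁ : A) : ∃ x₂, ConePreorder Q x₀ x₂ ∧ ConePreorder Q x₁ x₂ := by
  obtain ⟨p₀, h₀⟩ := hy.2 x₀
  obtain ⟨p₁, h₁⟩ := hy.2 x₁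
  exact ⟨y ^ max p₀ p₁, ConePreorder.trans hQ h₀ (ConePreorder.pow_mono hQ hy.1 (le_max_left ..)),
    ConePreorder.trans hQ h₁ (ConePreorder.pow_mono hQ hy.1 (le_max_right ..))⟩

end Preorder

theorem exists_isCofinalElt {A : Type*} [CommGroup A] [Group.FG A] {Q : Set (A → ℝ)}
    (hQ : IsFunctionalCone Q) (hclosed : IsClosed Q) (hsalient : IsSalientCone Q) :
    ∃ y : A, IsCofinalElt Q y := by
  obtain ⟨S, hS⟩ := Group.fg_def.mp ‹Group.FG A›
  set g : S → A := Subtype.val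
  have hg : Subgroup.closure (Set.range g) = ⊤ := by simpa [g] using hS
  set C := hQ.toConvexCone.map (charCoords g)
  have hCsalient : C.Salient := by
    refine ConvexCone.Salient.map (C := hQ.toConvexCone) hsalient ((injOn_charCoords hg).mono ?_)
    rintro f (hf | hf)
    · exact hQ.1 f hf
    · simpa using (hQ.1 _ hf).neg
  obtain ⟨m, hm⟩ := EuclideanSpace.exists_intCast_mem_of_isOpen isOpen_interior
    (C.interior_innerDual_nonempty (isClosed_image_charCoords hg hQ.1 hclosed) hCsalient)
    fun r hr x hx => PointedCone.smul_mem_interior _ hr hx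
  have hdual : ∀ f ∈ Q, ∀ v ∈ ProperCone.innerDual (C : Set _), 0 ≤ ⟪charCoords g f, v⟫ :=
    fun f hf v hv => hv ⟨f, hf, rfl⟩
  refine ⟨∏ i, g i ^ m i, fun f hf => ?_, fun a => ?_⟩
  · rw [inv_one, mul_one, (hQ.1 f hf).map_prod_zpow_eq_inner]
    exact hdual f hf _ (interior_subset hm)
  obtain ⟨k, rfl⟩ := exists_eq_prod_zpow hg a
  obtain ⟨p, hp⟩ := PointedCone.exists_nat_smul_add_mem _ hm (-WithLp.toLp 2 fun i => (k i : ℝ))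
  refine ⟨p, fun f hf => ?_⟩
  have hf' := hQ.1 f hf
  have := hdual f hf _ hp
  rwa [inner_add_right, inner_neg_right, ← Nat.cast_smul_eq_nsmul ℝ, real_inner_smul_right,
    ← hf'.map_prod_zpow_eq_inner, ← hf'.map_prod_zpow_eq_inner, ← sub_eq_add_neg, ← hf'.map_pow,
    ← hf'.map_mul_inv] at this

/-- for a closed salient cone `Q ⊆ (A ⊗_ℤ ℝ)^*` (`A` finitely generated),
`(A, ⪯_Q)` is a directed set: `⪯_Q` is reflexive, transitive, and any two elements have a
common upper bound. -/
theorem conePreorder_isDirected {A : Type*} [CommGroup A] [Group.FG A]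
    (Q : Set (A → ℝ)) (hQ : IsFunctionalCone Q) (hclosed : IsClosed Q)
    (hsalient : IsSalientCone Q) :
    (∀ x : A, ConePreorder Q x x) ∧
      (∀ x y z : A, ConePreorder Q x y → ConePreorder Q y z → ConePreorder Q x z) ∧
      (∀ x₀ x₁ : A, ∃ x₂ : A, ConePreorder Q x₀ x₂ ∧ ConePreorder Q x₁ x₂) := by
  obtain ⟨y, hy⟩ := exists_isCofinalElt hQ hclosed hsalient
  exact ⟨ConePreorder.refl hQ.1, fun _ _ _ => ConePreorder.trans hQ.1,
    hy.exists_upper_bound hQ.1⟩
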